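/- Let $X_n$ satisfy $X_{n+1} - X_n \leq \frac{f(X_n)}{n^{\gamma}} + \frac{Y_{n+1}}{n^{\gamma}}$, where $|Y_n| \leq M$ a.s., $E(Y_{n+1}\mid\mathscr{F}_n)=0$, $f(x) \leq |x|^k$ on $(-\epsilon,\epsilon)$ and $f(x) = |x|^k$ off $(-\epsilon,\epsilon)$, and let $x_0 < 0$ be such that $f(x) > M$ for all $x \leq x_0$. Set $C = \max(M, |X_1|, |x_0|)$. Then almost surely $X_n > -2C$ for all $n$. -/

import Mathlib

/-! Induction on `n`. Below `x₀` the drift `f(X_n) > M` beats the noise, so the step is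
upward; above `x₀ ≥ -C` the drift is nonnegative and the noise moves `X` by at most
`M / n^γ ≤ M ≤ C`, so `X_{n+1} > -2C` in either case. -/

open MeasureTheory Real Set

lemma neg_two_mul_lt_add_div_add_div {f : ℝ → ℝ} {M C x₀ x y a : ℝ}
    (hf_nonneg : 0 ≤ f x) (hfx₀ : x ≤ x₀ → M < f x) (hMC : M ≤ C) (hx₀C : -C ≤ x₀)
    (hy : |y| ≤ M) (ha : 1 ≤ a) (hx : -(2 * C) < x) :
    -(2 * C) < x + f x / a + y / a := by
  have ha0 : 0 < a := one_pos.trans_le ha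
  have hyM : -M ≤ y := neg_le_of_abs_le hy
  rw [add_assoc, ← add_div]
  by_cases hlow : x ≤ x₀
  · have : 0 < (f x + y) / a := div_pos (by linarith [hfx₀ hlow]) ha0
    linarith
  · have hM : 0 ≤ M := (abs_nonneg y).trans hy
    have : -M ≤ (f x + y) / a := by
      rw [le_div_iff₀ ha0]
      nlinarith
    linarith

theorem neg_two_mul_lt_of_le_add_div_add_div {f : ℝ → ℝ} {x y a : ℕ → ℝ} {M C x₀ : ℝ}
    (hf_nonneg : ∀ x, 0 ≤ f x) (hfx₀ : ∀ x ≤ x₀, M < f x) (hMC : M ≤ C) (hx₀C : -C ≤ x₀)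
    (hy : ∀ n, |y n| ≤ M) (ha : ∀ n, 1 ≤ n → 1 ≤ a n) (h1 : -(2 * C) < x 1)
    (hrec : ∀ n, 1 ≤ n → x n + f (x n) / a n + y (n + 1) / a n ≤ x (n + 1)) :
    ∀ n, 1 ≤ n → -(2 * C) < x n := by
  intro n hn
  induction n, hn using Nat.le_induction with
  | base => exact h1
  | succ n hn ih =>
    exact (neg_two_mul_lt_add_div_add_div (hf_nonneg _) (hfx₀ _) hMC hx₀C (hy _) (ha n hn)
      ih).trans_le (hrec n hn)

theorem stmt_18_general {Ω : Type*} {m : MeasurableSpace Ω} (P : Measure Ω)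
    (X Y : ℕ → Ω → ℝ) (f : ℝ → ℝ) (γ M x₀ x₁ : ℝ)
    (hγ : γ ∈ Ioo (1/2 : ℝ) 1)
    (hYb : ∀ n, ∀ᵐ ω ∂P, |Y n ω| ≤ M)
    (hf_nonneg : ∀ x, 0 ≤ f x)
    (hx₀ : x₀ < 0) (hfx₀ : ∀ x ≤ x₀, M < f x)
    (hinit : ∀ ω, X 1 ω = x₁)
    (hrec : ∀ᵐ ω ∂P, ∀ n, 1 ≤ n →
      X (n+1) ω = X n ω + f (X n ω) / (n:ℝ) ^ γ + Y (n+1) ω / (n:ℝ) ^ γ) :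
    ∀ᵐ ω ∂P, ∀ n, 1 ≤ n → -(2 * max M (max |x₁| |x₀|)) < X n ω := by
  set C := max M (max |x₁| |x₀|)
  have hx₁C : |x₁| ≤ C := (le_max_left _ _).trans (le_max_right _ _)
  have hx₀C : |x₀| ≤ C := (le_max_right _ _).trans (le_max_right _ _)
  have hC : 0 < C := (abs_pos.2 hx₀.ne).trans_le hx₀C
  have hpow (n : ℕ) (hn : 1 ≤ n) : 1 ≤ (n : ℝ) ^ γ :=
    one_le_rpow (by exact_mod_cast hn) (by linarith [hγ.1])
  filter_upwards [hrec, ae_all_iff.2 hYb] with ω hrecω hYω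
  refine neg_two_mul_lt_of_le_add_div_add_div hf_nonneg hfx₀ (le_max_left _ _)
    (neg_le_of_abs_le hx₀C) hYω hpow ?_ fun n hn ↦ (hrecω n hn).ge
  rw [hinit]
  linarith [neg_le_of_abs_le hx₁C]

/-- a.s. lower bound `X_n > -2C` with `C = max(M, |X₁|, |x₀|)`, for the
recursion `X_{n+1} = X_n + f(X_n)/n^γ + Y_{n+1}/n^γ` with `0 ≤ f(x) ≤ |x|^k` on `(-ε,ε)`,
`f(x) = |x|^k` off `(-ε,ε)`, and `f > M` on `(-∞, x₀]`. -/
theorem stmt_18 {Ω : Type*} {m : MeasurableSpace Ω} (P : Measure Ω) [IsProbabilityMeasure P]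
    (𝒢 : Filtration ℕ m) (X Y : ℕ → Ω → ℝ) (f : ℝ → ℝ) (γ k M ε x₀ x₁ : ℝ)
    (hγ : γ ∈ Ioo (1/2 : ℝ) 1) (hk : 1 < k) (hε : 0 < ε)
    (hYb : ∀ n, ∀ᵐ ω ∂P, |Y n ω| ≤ M)
    (hYmart : ∀ n, P[Y (n+1) | 𝒢 n] =ᵐ[P] 0)
    (hf_nonneg : ∀ x, 0 ≤ f x)
    (hf_le : ∀ x ∈ Ioo (-ε) ε, f x ≤ |x| ^ k)
    (hf_eq : ∀ x ∉ Ioo (-ε) ε, f x = |x| ^ k)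
    (hx₀ : x₀ < 0) (hfx₀ : ∀ x ≤ x₀, M < f x)
    (hinit : ∀ ω, X 1 ω = x₁)
    (hrec : ∀ᵐ ω ∂P, ∀ n, 1 ≤ n →
      X (n+1) ω = X n ω + f (X n ω) / (n:ℝ) ^ γ + Y (n+1) ω / (n:ℝ) ^ γ) :
    ∀ᵐ ω ∂P, ∀ n, 1 ≤ n → -(2 * max M (max |x₁| |x₀|)) < X n ω :=
  stmt_18_general (m := m) P X Y f γ M x₀ x₁ hγ hYb hf_nonneg hx₀ hfx₀ hinit hrec
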